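/- arXiv:1604.08217 — 2 statements merged into one kernel-verified Lean document; each statement's English description precedes it below -/
import Mathlib

section
/- Conservation of entanglement: let I and J be finite index types, ψ : I × J → ℂ a vector, and U, V unitary matrices on I and J respectively. Let ρ_L = Tr₂[ψ ψᴴ] denote the reduced density matrix of ψ (where ψψᴴ is the rank-one matrix with entries ψ_a · conj(ψ_b)), and let ρ_L' = Tr₂[((U ⊗ₖ V) ψ)((U ⊗ₖ V) ψ)ᴴ] be the reduced density matrix of the transformed state. Then ρ_L and ρ_L' are Hermitian positive semidefinite, ρ_L' = U ρ_L Uᴴ, and there exists a permutation π of I such that the eigenvalues of ρ_L' equal the eigenvalues of ρ_L composed with π; hence the entanglement entropy S(L) is invariant under tensor-product unitaries U ⊗ V. -/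
open Matrix
open Kronecker
open scoped ComplexOrder

/-!
Writing `ψ = vec Mᵀ` with `M i j = ψ (i, j)`, the reduced density matrix is `M Mᴴ`, hence
positive semidefinite, and `(U ⊗ₖ V) ψ` corresponds to `U M Vᵀ`, whose reduced density matrix
is `U M Vᵀ (Vᵀ)ᴴ Mᴴ Uᴴ = U (M Mᴴ) Uᴴ`. Conjugation by `U` preserves the characteristic
polynomial, and Mathlib's eigenvalues of a Hermitian matrix are determined by it (they are the
sorted roots, transported along a fixed enumeration of the index type), so the permutation can
be taken to be the identity.
-/

/-- Partial trace over the second tensor factor: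
`(Tr₂ M) i i' = ∑ j, M (i,j) (i',j)`. -/
noncomputable def trace2 {I J : Type*} [Fintype J] (M : Matrix (I × J) (I × J) ℂ) :
    Matrix I I ℂ :=
  fun i i' => ∑ j : J, M (i, j) (i', j)

theorem Matrix.charpoly_mul_mul_of_mul_eq_one {n R : Type*} [Fintype n] [DecidableEq n]
    [CommRing R] {U W : Matrix n n R} (hWU : W * U = 1) (A : Matrix n n R) :
    (U * A * W).charpoly = A.charpoly := by
  rw [charpoly_mul_comm, ← Matrix.mul_assoc, hWU, Matrix.one_mul]

theorem Matrix.kronecker_mulVec_vec_transpose {I J K L R : Type*} [Fintype I] [Fintype J]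
    [CommSemiring R] (U : Matrix K I R) (V : Matrix L J R) (M : Matrix I J R) :
    (U ⊗ₖ V) *ᵥ vec Mᵀ = vec (U * M * Vᵀ)ᵀ := by
  rw [kronecker_mulVec_vec, transpose_mul, transpose_mul, transpose_transpose, Matrix.mul_assoc]

theorem Matrix.mul_mul_transpose_mul_conjTranspose {I J K R : Type*} [Fintype I] [Fintype J]
    [DecidableEq J] [CommSemiring R] [StarRing R] (U : Matrix K I R) (M : Matrix I J R)
    {V : Matrix J J R} (hV : Vᴴ * V = 1) :
    (U * M * Vᵀ) * (U * M * Vᵀ)ᴴ = U * (M * Mᴴ) * Uᴴ := by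
  have hVt : Vᵀ * Vᵀᴴ = 1 := by
    rw [conjTranspose_transpose_eq_transpose_conjTranspose, ← transpose_mul, hV, transpose_one]
  simp only [conjTranspose_mul, Matrix.mul_assoc]
  rw [← Matrix.mul_assoc Vᵀ, hVt, Matrix.one_mul]

theorem trace2_vecMulVec_vec_transpose {I J : Type*} [Fintype I] [Fintype J]
    (M : Matrix I J ℂ) :
    trace2 (vecMulVec (vec Mᵀ) (star (vec Mᵀ))) = M * Mᴴ := by
  ext i i'
  simp [trace2, vecMulVec_apply, mul_apply]

theorem exists_vec_transpose_eq {I J R : Type*} (χ : I × J → R) :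
    ∃ M : Matrix I J R, vec Mᵀ = χ :=
  ⟨of (Function.curry χ), rfl⟩

theorem posSemidef_trace2_vecMulVec_star {I J : Type*} [Fintype I] [Fintype J]
    (χ : I × J → ℂ) : (trace2 (vecMulVec χ (star χ))).PosSemidef := by
  obtain ⟨M, rfl⟩ := exists_vec_transpose_eq χ
  rw [trace2_vecMulVec_vec_transpose]
  exact posSemidef_self_mul_conjTranspose M

theorem trace2_vecMulVec_kronecker_mulVec {I J : Type*} [Fintype I] [Fintype J] [DecidableEq J]
    (ψ : I × J → ℂ) (U : Matrix I I ℂ) {V : Matrix J J ℂ} (hV : Vᴴ * V = 1) :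
    trace2 (vecMulVec ((U ⊗ₖ V) *ᵥ ψ) (star ((U ⊗ₖ V) *ᵥ ψ))) =
      U * trace2 (vecMulVec ψ (star ψ)) * Uᴴ := by
  obtain ⟨M, rfl⟩ := exists_vec_transpose_eq ψ
  rw [kronecker_mulVec_vec_transpose, trace2_vecMulVec_vec_transpose,
    trace2_vecMulVec_vec_transpose, mul_mul_transpose_mul_conjTranspose U M hV]

theorem entanglement_conservation_general
    {I J : Type*} [Fintype I] [Fintype J] [DecidableEq I] [DecidableEq J]
    (ψ : I × J → ℂ) (U : Matrix I I ℂ) (V : Matrix J J ℂ)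
    (hU' : Uᴴ * U = 1) (hV' : Vᴴ * V = 1) :
    ∃ (h1 : (trace2 (vecMulVec ψ (star ψ))).PosSemidef)
      (h2 : (trace2 (vecMulVec ((U ⊗ₖ V) *ᵥ ψ) (star ((U ⊗ₖ V) *ᵥ ψ)))).PosSemidef),
      trace2 (vecMulVec ((U ⊗ₖ V) *ᵥ ψ) (star ((U ⊗ₖ V) *ᵥ ψ))) =
        U * trace2 (vecMulVec ψ (star ψ)) * Uᴴ ∧
      ∃ π : Equiv.Perm I, h2.1.eigenvalues = h1.1.eigenvalues ∘ π := by
  have hρ := trace2_vecMulVec_kronecker_mulVec ψ U hV'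
  refine ⟨posSemidef_trace2_vecMulVec_star ψ, posSemidef_trace2_vecMulVec_star _, hρ, 1, ?_⟩
  rw [Equiv.Perm.coe_one, Function.comp_id, IsHermitian.eigenvalues_eq_eigenvalues_iff, hρ]
  exact charpoly_mul_mul_of_mul_eq_one hU' _

/-- Conservation of entanglement: for a bipartite state `ψ` and unitaries `U`, `V`,
the reduced density matrices `ρ_L = Tr₂[ψψᴴ]` and
`ρ_L' = Tr₂[((U ⊗ₖ V)ψ)((U ⊗ₖ V)ψ)ᴴ]` are Hermitian positive semidefinite,
`ρ_L' = U ρ_L Uᴴ`, and the eigenvalues of `ρ_L'` are a permutation of those of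
`ρ_L`; hence the entanglement entropy is invariant under `U ⊗ V`. -/
theorem entanglement_conservation
    {I J : Type*} [Fintype I] [Fintype J] [DecidableEq I] [DecidableEq J]
    (ψ : I × J → ℂ) (U : Matrix I I ℂ) (V : Matrix J J ℂ)
    (hU : U * Uᴴ = 1) (hU' : Uᴴ * U = 1)
    (hV : V * Vᴴ = 1) (hV' : Vᴴ * V = 1) :
    ∃ (h1 : (trace2 (vecMulVec ψ (star ψ))).PosSemidef)
      (h2 : (trace2 (vecMulVec ((U ⊗ₖ V) *ᵥ ψ) (star ((U ⊗ₖ V) *ᵥ ψ)))).PosSemidef),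
      trace2 (vecMulVec ((U ⊗ₖ V) *ᵥ ψ) (star ((U ⊗ₖ V) *ᵥ ψ))) =
        U * trace2 (vecMulVec ψ (star ψ)) * Uᴴ ∧
      ∃ π : Equiv.Perm I, h2.1.eigenvalues = h1.1.eigenvalues ∘ π :=
  entanglement_conservation_general ψ U V hU' hV'
end

section
/- Concavity of the area element ("the area has negative second derivative in λ"): let n > 0 be a real number and θ, A : ℝ → ℝ be differentiable with A(λ) > 0 for all λ, A'(λ) = θ(λ) · A(λ) for all λ, and θ'(λ) ≤ −θ(λ)²/n for all λ. Then the function λ ↦ A(λ)^{1/n} is concave on ℝ. -/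
/-!
With `f = A ^ (1/n)` and `g = θ / n` one has `f' = g f`, hence `f'' = (g' + g²) f`, and the
Raychaudhuri inequality `θ' ≤ -θ²/n` is exactly the Riccati inequality `g' + g² ≤ 0`.
-/

open Set

theorem concaveOn_univ_of_hasDerivAt2_nonpos {f f' f'' : ℝ → ℝ}
    (hf : ∀ x, HasDerivAt f (f' x) x) (hf' : ∀ x, HasDerivAt f' (f'' x) x)
    (hf''_nonpos : ∀ x, f'' x ≤ 0) : ConcaveOn ℝ univ f := by
  refine concaveOn_of_hasDerivWithinAt2_nonpos (f' := f') convex_univ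
    (fun x _ => (hf x).continuousAt.continuousWithinAt) ?_ ?_ fun x _ => hf''_nonpos x
  all_goals simp only [interior_univ, mem_univ, hasDerivWithinAt_univ, forall_const]
  exacts [hf, hf']

theorem concaveOn_univ_of_hasDerivAt_mul_of_deriv_add_sq_nonpos {f g : ℝ → ℝ}
    (hg : Differentiable ℝ g)
    (hf : ∀ x, HasDerivAt f (g x * f x) x) (hf_nonneg : ∀ x, 0 ≤ f x)
    (hg_riccati : ∀ x, deriv g x + g x ^ 2 ≤ 0) : ConcaveOn ℝ univ f := by
  refine concaveOn_univ_of_hasDerivAt2_nonpos hf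
    (fun x => (hg x).hasDerivAt.mul (hf x)) fun x => ?_
  calc deriv g x * f x + g x * (g x * f x) = (deriv g x + g x ^ 2) * f x := by ring
    _ ≤ 0 := mul_nonpos_of_nonpos_of_nonneg (hg_riccati x) (hf_nonneg x)

theorem HasDerivAt.rpow_const_of_pos {A : ℝ → ℝ} {θ : ℝ} {x : ℝ}
    (hA : HasDerivAt A (θ * A x) x) (hAx : 0 < A x) (p : ℝ) :
    HasDerivAt (fun y => A y ^ p) (p * θ * A x ^ p) x := by
  convert hA.rpow_const (p := p) (Or.inl hAx.ne') using 1
  rw [Real.rpow_sub hAx, Real.rpow_one]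
  field_simp

/-- Concavity of the area element: if `A' = θ A` with `A > 0` and the expansion
satisfies the Raychaudhuri inequality `θ' ≤ −θ²/n`, then `λ ↦ A(λ)^{1/n}` is
concave on `ℝ`. -/
theorem area_element_rpow_concave
    (n : ℝ) (hn : 0 < n) (θ A : ℝ → ℝ)
    (hθ : Differentiable ℝ θ) (hA : Differentiable ℝ A)
    (hApos : ∀ l : ℝ, 0 < A l)
    (hA' : ∀ l : ℝ, deriv A l = θ l * A l)
    (hθ' : ∀ l : ℝ, deriv θ l ≤ -(θ l) ^ 2 / n) :
    ConcaveOn ℝ Set.univ (fun l : ℝ => A l ^ (1 / n : ℝ)) := by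
  have hf : ∀ l, HasDerivAt (fun l => A l ^ (1 / n)) (θ l / n * A l ^ (1 / n)) l := by
    intro l
    have hAl : HasDerivAt A (θ l * A l) l := hA' l ▸ (hA l).hasDerivAt
    convert hAl.rpow_const_of_pos (hApos l) (1 / n) using 1
    ring
  refine concaveOn_univ_of_hasDerivAt_mul_of_deriv_add_sq_nonpos (g := fun l => θ l / n)
    (hθ.div_const n) hf (fun l => (Real.rpow_pos_of_pos (hApos l) _).le) fun l => ?_
  have hθn : deriv θ l * n + θ l ^ 2 ≤ 0 := by linarith [(le_div_iff₀ hn).mp (hθ' l)]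
  calc deriv (fun l => θ l / n) l + (θ l / n) ^ 2 = (deriv θ l * n + θ l ^ 2) / n ^ 2 := by
        rw [deriv_div_const]; field_simp
    _ ≤ 0 := div_nonpos_of_nonpos_of_nonneg hθn (sq_nonneg n)
end
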